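/- arXiv:1301.6285 — 2 statements merged into one kernel-verified Lean document; each statement's English description precedes it below -/
import Mathlib

section
/- Let p be a prime, α a positive integer not divisible by p, and e ≥ 1. Let S be the multiset of least nonnegative residues mod p^e of u(i) for all integers i with α·p^(e-1) < i ≤ α·p^e. Then every residue class mod p^e that is a unit (coprime to p) and lies in [1, p^e) occurs exactly α times in S. -/
/-- The unit part of `n` with respect to `p`: `n / p^(ν_p(n))`. -/
def unitPart (p n : ℕ) : ℕ := n / p ^ (padicValNat p n)

lemma unitPart_eq_ordCompl (p n : ℕ) (hp : p.Prime) :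
    unitPart p n = n / p ^ (n.factorization p) := by
  rw [unitPart, Nat.factorization_def n hp]

lemma pow_mul_unitPart (p n : ℕ) (hp : p.Prime) :
    p ^ (padicValNat p n) * unitPart p n = n := by
  rw [unitPart_eq_ordCompl p n hp, ← Nat.factorization_def n hp]
  exact Nat.ordProj_mul_ordCompl_eq_self n p

lemma not_dvd_unitPart (p n : ℕ) (hp : p.Prime) (hn : n ≠ 0) : ¬ p ∣ unitPart p n := by
  rw [unitPart_eq_ordCompl p n hp]
  exact Nat.not_dvd_ordCompl hp hn

lemma unitPart_pow_mul (p v m : ℕ) (hp : p.Prime) (hm : ¬ p ∣ m) (hm0 : m ≠ 0) :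
    unitPart p (p ^ v * m) = m := by
  rw [unitPart_eq_ordCompl _ _ hp]
  have h : (p ^ v * m).factorization p = v := by
    rw [Nat.factorization_mul (pow_ne_zero v hp.pos.ne') hm0]
    simp [Nat.factorization_pow, Nat.factorization_eq_zero_of_not_dvd hm, hp.factorization]
  rw [h, Nat.mul_div_cancel_left _ (pow_pos hp.pos v)]

theorem stmt1 (p α e : ℕ) (hp : p.Prime) (hα : 0 < α) (hpα : ¬ p ∣ α) (he : 1 ≤ e)
    (S : Multiset ℕ)
    (hS : S = (Finset.Ioc (α * p ^ (e - 1)) (α * p ^ e)).val.map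
      (fun i => unitPart p i % p ^ e))
    (r : ℕ) (hr1 : 1 ≤ r) (hr2 : r < p ^ e) (hru : Nat.Coprime r p) :
    S.count r = α := by
  subst hS
  have hp1 : 1 < p := hp.one_lt
  have hpe : 0 < p ^ e := pow_pos hp.pos e
  have hpr : ¬ p ∣ r := fun h => hp.one_lt.ne' (Nat.eq_one_of_dvd_coprimes hru h dvd_rfl)
  set A := α * p ^ (e - 1) with hA
  set B := α * p ^ e with hB
  have hAB : A * p = B := by
    rw [hA, hB, mul_assoc, ← pow_succ, Nat.sub_add_cancel he]
  have hpeB : p ^ e ∣ B := Dvd.intro_left α rfl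
  rw [Multiset.count_map]
  have hfil : (Multiset.filter (fun a => r = unitPart p a % p ^ e) (Finset.Ioc A B).val).card
      = ((Finset.Ioc A B).filter (fun a => r = unitPart p a % p ^ e)).card := rfl
  rw [hfil]
  have hcard : ((Finset.Ioc A B).filter (fun a => r = unitPart p a % p ^ e)).card
      = (Finset.range α).card := by
    apply Finset.card_bij' (fun i _ => unitPart p i / p ^ e)
      (fun k _ => p ^ (Nat.log p (B / (r + k * p ^ e))) * (r + k * p ^ e))
    · -- maps into range α
      intro i hi
      simp only [Finset.mem_filter, Finset.mem_Ioc] at hi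
      obtain ⟨⟨hiA, hiB⟩, hir⟩ := hi
      have hi0 : i ≠ 0 := by omega
      have hmdvd : unitPart p i ∣ i := by
        rw [unitPart_eq_ordCompl _ _ hp]; exact Nat.ordCompl_dvd i p
      have hmle : unitPart p i ≤ B := le_trans (Nat.le_of_dvd (Nat.pos_of_ne_zero hi0) hmdvd) hiB
      have hmne : unitPart p i ≠ B := by
        intro h
        rw [h, Nat.mod_eq_zero_of_dvd hpeB] at hir
        omega
      rw [Finset.mem_range]
      rw [Nat.div_lt_iff_lt_mul hpe]
      omega
    · -- maps into filter
      intro k hk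
      rw [Finset.mem_range] at hk
      set m := r + k * p ^ e with hm
      have hm0 : m ≠ 0 := by omega
      have hmB : m < B := by
        have : m < (k + 1) * p ^ e := by rw [add_mul, one_mul]; omega
        calc m < (k + 1) * p ^ e := this
        _ ≤ α * p ^ e := Nat.mul_le_mul_right _ (by omega)
      have hpm : ¬ p ∣ m := by
        intro h
        have hpdpe : p ∣ p ^ e := dvd_pow_self p (by omega)
        have h1 : p ∣ k * p ^ e := hpdpe.mul_left k
        have h2 := Nat.dvd_sub h h1
        rw [hm, Nat.add_sub_cancel] at h2
        exact hpr h2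
      set v := Nat.log p (B / m) with hv
      have hBm : 1 ≤ B / m := Nat.one_le_div_iff (Nat.pos_of_ne_zero hm0) |>.mpr hmB.le
      have h1 : p ^ v * m ≤ B := by
        rw [← Nat.le_div_iff_mul_le (Nat.pos_of_ne_zero hm0)]
        exact Nat.pow_log_le_self p (by omega)
      have h2 : B < p ^ (v + 1) * m := by
        rw [← Nat.div_lt_iff_lt_mul (Nat.pos_of_ne_zero hm0)] at *
        exact Nat.lt_pow_succ_log_self hp1 _
      have h3 : A < p ^ v * m := by
        have : A * p < (p ^ v * m) * p := by
          rw [hAB]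
          calc B < p ^ (v + 1) * m := h2
          _ = (p ^ v * m) * p := by ring
        exact lt_of_mul_lt_mul_right this (Nat.zero_le p)
      simp only [Finset.mem_filter, Finset.mem_Ioc]
      refine ⟨⟨h3, h1⟩, ?_⟩
      rw [unitPart_pow_mul p v m hp hpm hm0, hm, Nat.add_mul_mod_self_right,
        Nat.mod_eq_of_lt hr2]
    · -- left inverse
      intro i hi
      simp only [Finset.mem_filter, Finset.mem_Ioc] at hi
      obtain ⟨⟨hiA, hiB⟩, hir⟩ := hi
      have hi0 : i ≠ 0 := by omega
      set m := unitPart p i with hm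
      set w := padicValNat p i with hw
      have hiv : p ^ w * m = i := pow_mul_unitPart p i hp
      have hm0 : m ≠ 0 := by
        intro h; rw [h, mul_zero] at hiv; exact hi0 hiv.symm
      have hrm : r + m / p ^ e * p ^ e = m := by
        conv_rhs => rw [← Nat.mod_add_div m (p ^ e)]
        rw [← hir]; ring
      rw [hrm]
      have hlog : Nat.log p (B / m) = w := by
        apply Nat.log_eq_of_pow_le_of_lt_pow
        · rw [Nat.le_div_iff_mul_le (Nat.pos_of_ne_zero hm0), hiv]; exact hiB
        · rw [Nat.div_lt_iff_lt_mul (Nat.pos_of_ne_zero hm0), ← hAB]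
          calc A * p < (p ^ w * m) * p := by
                rw [hiv]; exact (Nat.mul_lt_mul_right hp.pos).mpr hiA
          _ = p ^ (w + 1) * m := by ring
      rw [hlog, hiv]
    · -- right inverse
      intro k hk
      rw [Finset.mem_range] at hk
      set m := r + k * p ^ e with hm
      have hm0 : m ≠ 0 := by omega
      have hpm : ¬ p ∣ m := by
        intro h
        have hpdpe : p ∣ p ^ e := dvd_pow_self p (by omega)
        have h1 : p ∣ k * p ^ e := hpdpe.mul_left k
        have h2 := Nat.dvd_sub h h1
        rw [hm, Nat.add_sub_cancel] at h2
        exact hpr h2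
      rw [unitPart_pow_mul p _ m hp hpm hm0, hm, Nat.add_mul_div_right _ _ hpe,
        Nat.div_eq_of_lt hr2, zero_add]
  rw [hcard, Finset.card_range]
end

section
/- Let p be a prime and α a positive integer not divisible by p. The sequence e ↦ (-1)^(p·α·e) · u((α·p^e)!) converges in the p-adic integers Z_p (equivalently, it is a Cauchy sequence for the p-adic metric). -/
/-!
Removing the multiples of `p` from `(n p)!` gives `u((n p)!) = u(n!) · Q(n p)`, where `Q(N)` is the
product of the integers in `[1, N]` prime to `p`. Modulo `p^e` the integers prime to `p` in
`[1, N p^e]` run `N` times through the units of `ZMod (p^e)`, whose product `W` is `-1` for odd `p`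
(Gauss' generalisation of Wilson's theorem) and satisfies `W² = 1` for `p = 2`; in both cases
`(-W)^p = 1`. Hence `(-1)^(pα) · Q(α p^(e+1)) ≡ 1 (mod p^e)`, so consecutive terms of the sequence
differ by a multiple of `p^e`, and the sequence is Cauchy in `ℤ_[p]`.
-/

open Finset
open scoped Nat

def primeToFactorial (p n : ℕ) : ℕ := ∏ k ∈ Ico 1 (n + 1) with ¬ p ∣ k, k

section Factorial
variable {p : ℕ} [hp : Fact p.Prime]

theorem not_dvd_primeToFactorial (n : ℕ) : ¬ p ∣ primeToFactorial p n :=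
  (Prime.dvd_finsetProd_iff hp.out.prime _).not.mpr fun ⟨_, hk, hdvd⟩ => (mem_filter.mp hk).2 hdvd

theorem filter_dvd_Ico_mul_eq_map (n : ℕ) :
    {k ∈ Ico 1 (n * p + 1) | p ∣ k} =
      (Ico 1 (n + 1)).map ⟨(· * p), mul_left_injective₀ hp.out.ne_zero⟩ := by
  ext k
  simp only [mem_filter, mem_Ico, mem_map, Function.Embedding.coeFn_mk]
  constructor
  · rintro ⟨⟨h1, h2⟩, j, rfl⟩
    refine ⟨j, ⟨?_, ?_⟩, mul_comm _ _⟩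
    · exact Nat.pos_of_ne_zero (by rintro rfl; simp at h1)
    · exact Nat.lt_succ_of_le (Nat.le_of_mul_le_mul_right (by rw [mul_comm]; omega) hp.out.pos)
  · rintro ⟨j, ⟨h1, h2⟩, rfl⟩
    exact ⟨⟨Nat.mul_pos h1 hp.out.pos, Nat.lt_succ_of_le (Nat.mul_le_mul_right p (by omega))⟩,
      dvd_mul_left p j⟩

theorem factorial_mul_self_eq (n : ℕ) :
    (n * p)! = p ^ n * n ! * primeToFactorial p (n * p) := by
  rw [← prod_Ico_id_eq_factorial, ← prod_filter_mul_prod_filter_not _ (p ∣ ·),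
    filter_dvd_Ico_mul_eq_map, prod_map, primeToFactorial, Function.Embedding.coeFn_mk,
    prod_mul_distrib, prod_const, Nat.card_Ico, add_tsub_cancel_right, prod_Ico_id_eq_factorial]
  ring

theorem unitPart_eq_ordCompl_s4 (n : ℕ) : unitPart p n = ordCompl[p] n := by
  rw [unitPart, Nat.factorization_def _ hp.out]

theorem unitPart_factorial_mul_self (n : ℕ) :
    unitPart p (n * p)! = unitPart p n ! * primeToFactorial p (n * p) := by
  simp only [unitPart_eq_ordCompl_s4, factorial_mul_self_eq, Nat.ordCompl_mul,
    Nat.ordCompl_self_pow hp.out, one_mul,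
    (Nat.ordCompl_eq_self_iff_zero_or_not_dvd _ hp.out).mpr (Or.inr (not_dvd_primeToFactorial _))]

end Factorial

theorem prod_ite_isUnit_eq_prod_units {M : Type*} [CommMonoid M] [Fintype M] [Fintype Mˣ]
    [DecidablePred (IsUnit : M → Prop)] :
    ∏ x : M, (if IsUnit x then x else 1) = ((∏ u : Mˣ, u : Mˣ) : M) := by
  rw [← prod_filter, Units.coe_prod]
  symm
  exact prod_bij (fun u _ => (u : M)) (by simp) (fun _ _ _ _ => Units.ext)
    (fun x hx => let ⟨u, hu⟩ := (mem_filter.mp hx).2; ⟨u, mem_univ u, hu⟩)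
    (by simp)

section CommGroup
variable {G : Type*} [CommGroup G] [Fintype G]

theorem prod_univ_eq_of_inv_eq_self_iff {a : G} (h : ∀ x : G, x⁻¹ = x ↔ x = 1 ∨ x = a) :
    ∏ x : G, x = a := by
  classical
  have ha : a⁻¹ = a := (h a).mpr (Or.inr rfl)
  have : ∏ x ∈ univ.erase a, x = 1 :=
    prod_involution (fun x _ => x⁻¹) (fun x _ => mul_inv_cancel x)
      (fun x hx hx1 hinv => ((h x).mp hinv).elim hx1 (ne_of_mem_erase hx))
      (fun x hx => mem_erase.mpr ⟨fun hinv => ne_of_mem_erase hx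
        (by rw [← ha, ← hinv, inv_inv]), mem_univ _⟩)
      (fun x _ => inv_inv x)
  rw [← insert_erase (mem_univ a), prod_insert (notMem_erase _ _), this, mul_one]

theorem prod_univ_sq_eq_one : (∏ x : G, x) ^ 2 = 1 := by
  have : ∏ x : G, x⁻¹ = ∏ x : G, x := Fintype.prod_equiv (Equiv.inv G) _ _ fun _ => rfl
  rw [sq]
  nth_rewrite 1 [← this]
  rw [prod_inv_distrib, inv_mul_cancel]

end CommGroup

section ZMod
variable {p : ℕ} [hp : Fact p.Prime]

theorem ZMod.units_inv_eq_self_iff_of_prime_pow (hp2 : p ≠ 2) (e : ℕ) (u : (ZMod (p ^ e))ˣ) :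
    u⁻¹ = u ↔ u = 1 ∨ u = -1 := by
  refine ⟨fun hu => ?_, by rintro (rfl | rfl) <;> simp⟩
  obtain ⟨a, ha⟩ := ZMod.intCast_surjective (u : ZMod (p ^ e))
  have hdvd : (p : ℤ) ^ e ∣ (a - 1) * (a + 1) := by
    have : (u : ZMod (p ^ e)) * u = 1 := by
      rw [← Units.val_mul]; nth_rewrite 1 [← hu]; rw [inv_mul_cancel, Units.val_one]
    exact_mod_cast (ZMod.intCast_zmod_eq_zero_iff_dvd _ (p ^ e)).mp
      (by push_cast; rw [ha]; linear_combination this)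
  have hprime : Prime (p : ℤ) := Nat.prime_iff_prime_int.mp hp.out
  have hnot : ¬ ((p : ℤ) ∣ a - 1 ∧ (p : ℤ) ∣ a + 1) := by
    rintro ⟨h₁, h₂⟩
    have h2 : (p : ℤ) ∣ 2 := by simpa using dvd_sub h₂ h₁
    exact hp2 ((Nat.prime_dvd_prime_iff_eq hp.out Nat.prime_two).mp (by exact_mod_cast h2))
  have hzero : ∀ b : ℤ, (p : ℤ) ^ e ∣ b → (b : ZMod (p ^ e)) = 0 := fun b hb =>
    (ZMod.intCast_zmod_eq_zero_iff_dvd b (p ^ e)).mpr (by exact_mod_cast hb)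
  rw [Units.ext_iff, Units.ext_iff, Units.val_one, Units.val_neg, Units.val_one, ← ha]
  by_cases h₁ : (p : ℤ) ∣ a + 1
  · have := hzero _ (hprime.pow_dvd_of_dvd_mul_left e (fun h => hnot ⟨h, h₁⟩) hdvd)
    push_cast at this
    exact Or.inr (by linear_combination this)
  · have := hzero _ (hprime.pow_dvd_of_dvd_mul_right e h₁ hdvd)
    push_cast at this
    exact Or.inl (by linear_combination this)

theorem ZMod.prod_units_prime_pow (hp2 : p ≠ 2) (e : ℕ) : ∏ u : (ZMod (p ^ e))ˣ, u = -1 :=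
  prod_univ_eq_of_inv_eq_self_iff (units_inv_eq_self_iff_of_prime_pow hp2 e)

theorem ZMod.neg_prod_units_prime_pow_pow_self (e : ℕ) :
    (-∏ u : (ZMod (p ^ e))ˣ, u) ^ p = 1 := by
  by_cases hp2 : p = 2
  · subst hp2
    rw [neg_sq, prod_univ_sq_eq_one]
  · rw [prod_units_prime_pow hp2, neg_neg, one_pow]

theorem ZMod.prod_range_mul_eq_pow {M : Type*} [CommMonoid M] {m : ℕ} [NeZero m]
    (f : ZMod m → M) (N : ℕ) : ∏ k ∈ range (N * m), f k = (∏ x, f x) ^ N := by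
  induction N with
  | zero => simp
  | succ N ih =>
    have hperiod : ∏ k ∈ range m, f ((N * m + k : ℕ) : ZMod m) = ∏ x, f x := by
      simp only [Nat.cast_add, Nat.cast_mul, ZMod.natCast_self, mul_zero, zero_add]
      exact prod_nbij' (↑) ZMod.val (by simp) (by simp [ZMod.val_lt])
        (by simpa using fun _ => Nat.mod_eq_of_lt) (by simp) (by simp)
    rw [add_one_mul, prod_range_add, ih, hperiod, pow_succ]

theorem cast_primeToFactorial_mul_pow {e : ℕ} (he : e ≠ 0) (N : ℕ) :
    (primeToFactorial p (N * p ^ e) : ZMod (p ^ e)) =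
      (↑(∏ u : (ZMod (p ^ e))ˣ, u) : ZMod (p ^ e)) ^ N := by
  classical
  have : NeZero (p ^ e) := ⟨pow_ne_zero e hp.out.ne_zero⟩
  have hunit : ∀ k : ℕ, IsUnit (k : ZMod (p ^ e)) ↔ ¬ p ∣ k := fun k => by
    rw [ZMod.isUnit_iff_coprime, Nat.coprime_pow_right_iff (Nat.pos_of_ne_zero he),
      Nat.coprime_comm, hp.out.coprime_iff_not_dvd]
  let g : ZMod (p ^ e) → ZMod (p ^ e) := fun x => if IsUnit x then x else 1
  calc (primeToFactorial p (N * p ^ e) : ZMod (p ^ e))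
      = ∏ k ∈ range (N * p ^ e), g (1 + (k : ZMod (p ^ e))) := by
        rw [primeToFactorial, Nat.cast_prod, prod_filter, prod_Ico_eq_prod_range,
          add_tsub_cancel_right]
        refine prod_congr rfl fun k _ => ?_
        simp only [g, ← Nat.cast_one (R := ZMod (p ^ e)), ← Nat.cast_add, hunit]
    _ = (∏ x, g (1 + x)) ^ N := ZMod.prod_range_mul_eq_pow (fun x => g (1 + x)) N
    _ = (∏ x, g x) ^ N := by
        rw [Fintype.prod_equiv (Equiv.addLeft 1) (fun x => g (1 + x)) g fun _ => rfl]
    _ = _ := by rw [prod_ite_isUnit_eq_prod_units]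

end ZMod

section Padic
variable {p : ℕ} [hp : Fact p.Prime]

theorem PadicInt.pow_dvd_iff_toZModPow_eq_zero (x : ℤ_[p]) (n : ℕ) :
    (p : ℤ_[p]) ^ n ∣ x ↔ toZModPow n x = 0 := by
  rw [← RingHom.mem_ker, ker_toZModPow, Ideal.mem_span_singleton]

theorem PadicInt.pow_dvd_neg_one_pow_mul_primeToFactorial_sub_one (e t : ℕ) :
    (p : ℤ_[p]) ^ e ∣ (-1) ^ (p * t) * (primeToFactorial p (p * t * p ^ e) : ℤ_[p]) - 1 := by
  rcases eq_or_ne e 0 with rfl | he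
  · simp
  rw [pow_dvd_iff_toZModPow_eq_zero, map_sub, map_mul, map_pow, map_neg, map_one, map_natCast,
    cast_primeToFactorial_mul_pow he, ← mul_pow, neg_one_mul, ← Units.val_neg,
    ← Units.val_pow_eq_pow_val, pow_mul, ZMod.neg_prod_units_prime_pow_pow_self, one_pow,
    Units.val_one, sub_self]

theorem PadicInt.exists_tendsto_of_pow_dvd_sub {x : ℕ → ℤ_[p]}
    (h : ∀ e, (p : ℤ_[p]) ^ e ∣ x (e + 1) - x e) :
    ∃ L, Filter.Tendsto x Filter.atTop (nhds L) := by
  refine cauchySeq_tendsto_of_complete (cauchySeq_of_le_geometric (p : ℝ)⁻¹ 1 ?_ fun e => ?_)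
  · exact inv_lt_one_of_one_lt₀ (by exact_mod_cast hp.out.one_lt)
  · rw [dist_comm, dist_eq_norm, one_mul, inv_pow, ← zpow_natCast, ← zpow_neg,
      norm_le_pow_iff_mem_span_pow, Ideal.mem_span_singleton]
    exact h e

end Padic

theorem stmt4_general (p : ℕ) [Fact p.Prime] (α : ℕ) :
    ∃ L : ℤ_[p], Filter.Tendsto
      (fun e : ℕ => ((-1 : ℤ_[p]) ^ (p * α * e) *
        (unitPart p (Nat.factorial (α * p ^ e)) : ℤ_[p])))
      Filter.atTop (nhds L) := by
  refine PadicInt.exists_tendsto_of_pow_dvd_sub fun e => ?_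
  rw [show α * p ^ (e + 1) = α * p ^ e * p by ring, unitPart_factorial_mul_self,
    show α * p ^ e * p = p * α * p ^ e by ring]
  set u := unitPart p (α * p ^ e)!
  set Q := primeToFactorial p (p * α * p ^ e)
  have hfactor : (-1 : ℤ_[p]) ^ (p * α * (e + 1)) * ((u * Q : ℕ) : ℤ_[p]) - (-1) ^ (p * α * e) * u
      = (-1) ^ (p * α * e) * u * ((-1) ^ (p * α) * Q - 1) := by
    push_cast; ring
  rw [hfactor]
  exact dvd_mul_of_dvd_right (PadicInt.pow_dvd_neg_one_pow_mul_primeToFactorial_sub_one e α) _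

theorem stmt4 (p : ℕ) [Fact p.Prime] (α : ℕ) (hα : 0 < α) (hpα : ¬ p ∣ α) :
    ∃ L : ℤ_[p], Filter.Tendsto
      (fun e : ℕ => ((-1 : ℤ_[p]) ^ (p * α * e) *
        (unitPart p (Nat.factorial (α * p ^ e)) : ℤ_[p])))
      Filter.atTop (nhds L) :=
  stmt4_general p α
end
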